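/- Let K ⊂ ℝ^d be nonempty compact, r > 0 with d_K(x) = r, and suppose x ∉ conv Σ_K(x). Set η := dist(x, conv Σ_K(x)) > 0 and let v be a unit vector with x + ηv ∈ [x, s] for some s ∈ conv Σ_K(x). Then the open ball int B(x + ηv, η) is disjoint from the closed complement of the r-sublevel set, i.e., int B(x + ηv, η) ⊂ {y : d_K(y) < r}, and consequently for every y with d_K(y) ≥ r one has (y − x)·v ≤ |y − x|²/(2η). -/

import Mathlib

/-!
For a nearest point `a ∈ Σ_K(x)` and any `y` with `d_K(y) ≥ r = |x - a|`, expanding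
`|y - a|² ≥ |x - a|²` gives `⟪y - x, a - x⟫ ≤ |y - x|² / 2`. This is a half-space condition on `a`,
so it passes to `conv Σ_K(x)` and in particular to `s`. Since `η v = b (s - x)` with `b ∈ [0, 1]`,
it becomes `⟪y - x, v⟫ ≤ |y - x|² / (2η)`, which for a unit vector `v` says exactly
`|y - (x + η v)| ≥ η`. That `η > 0` comes from the compactness of `conv Σ_K(x)` (Carathéodory).
-/

open Metric

/-- The set of nearest points of `K` to `x`. -/
def nearestPoints {d : ℕ} (K : Set (EuclideanSpace ℝ (Fin d)))
    (x : EuclideanSpace ℝ (Fin d)) : Set (EuclideanSpace ℝ (Fin d)) :=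
  {a ∈ K | dist x a = Metric.infDist x K}

open RealInnerProductSpace Module

section Caratheodory

variable {𝕜 E : Type*} [Field 𝕜] [LinearOrder 𝕜] [IsStrictOrderedRing 𝕜]
  [AddCommGroup E] [Module 𝕜 E] [FiniteDimensional 𝕜 E]

/-- Carathéodory: a point of the hull is a convex combination of at most `finrank + 1` points
of `s`; shorter combinations are padded with zero weights. -/
theorem convexHull_eq_image_stdSimplex_prod {s : Set E} (hs : s.Nonempty) :
    convexHull 𝕜 s =
      (fun p : (Fin (finrank 𝕜 E + 1) → 𝕜) × (Fin (finrank 𝕜 E + 1) → E) => ∑ i, p.1 i • p.2 i) ''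
        (stdSimplex 𝕜 _ ×ˢ Set.univ.pi fun _ => s) := by
  refine subset_antisymm (fun x hx => ?_) ?_
  · obtain ⟨ι, _, z, w, hzs, hz, hw0, hw1, rfl⟩ := eq_pos_convex_span_of_mem_convexHull hx
    obtain ⟨e⟩ : Nonempty (ι ↪ Fin (finrank 𝕜 E + 1)) := by
      refine Function.Embedding.nonempty_of_card_le ?_
      simpa using hz.card_le_finrank_succ.trans (Nat.succ_le_succ (Submodule.finrank_le _))
    set w' := Function.extend e w 0
    set z' := Function.extend e z fun _ => hs.some
    have hw' (i : ι) : w' (e i) = w i := e.injective.extend_apply _ _ i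
    have hz' (i : ι) : z' (e i) = z i := e.injective.extend_apply _ _ i
    have hw'0 (j) (hj : j ∉ Set.range e) : w' j = 0 := Function.extend_apply' _ _ _ hj
    refine ⟨(w', z'), ⟨⟨fun j => ?_, ?_⟩, fun j _ => show z' j ∈ s from ?_⟩, ?_⟩
    · by_cases hj : j ∈ Set.range e
      · obtain ⟨i, rfl⟩ := hj
        exact (hw0 i).le.trans (hw' i).ge
      · exact (hw'0 j hj).ge
    · rw [← hw1]
      exact (Fintype.sum_of_injective e e.injective _ _ hw'0 fun i => (hw' i).symm).symm
    · by_cases hj : j ∈ Set.range e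
      · obtain ⟨i, rfl⟩ := hj
        exact (hz' i).symm ▸ hzs (Set.mem_range_self i)
      · exact (show z' j = hs.some from Function.extend_apply' _ _ _ hj) ▸ hs.some_mem
    · refine (Fintype.sum_of_injective e e.injective _ _ (fun j hj => ?_) fun i => ?_).symm
      · simp [hw'0 j hj]
      · simp [hw', hz']
  · rintro _ ⟨⟨w, z⟩, ⟨hw, hz⟩, rfl⟩
    exact (convex_convexHull 𝕜 s).sum_mem (fun i _ => hw.1 i) hw.2
      fun i _ => subset_convexHull 𝕜 s (hz i trivial)

end Caratheodory

theorem IsCompact.convexHull {E : Type*} [NormedAddCommGroup E] [NormedSpace ℝ E]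
    [FiniteDimensional ℝ E] {s : Set E} (hs : IsCompact s) : IsCompact (convexHull ℝ s) := by
  rcases s.eq_empty_or_nonempty with rfl | hne
  · simp
  rw [convexHull_eq_image_stdSimplex_prod hne]
  exact ((isCompact_stdSimplex ℝ _).prod (isCompact_univ_pi fun _ => hs)).image
    (continuous_finsetSum _ fun i _ =>
      ((continuous_apply i).comp continuous_fst).smul ((continuous_apply i).comp continuous_snd))

theorem IsCompact.nearestPoints {d : ℕ} {K : Set (EuclideanSpace ℝ (Fin d))} (hK : IsCompact K)
    (x : EuclideanSpace ℝ (Fin d)) : IsCompact (nearestPoints K x) :=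
  hK.inter_right (isClosed_eq (continuous_const.dist continuous_id) continuous_const)

theorem nearestPoints_nonempty {d : ℕ} {K : Set (EuclideanSpace ℝ (Fin d))} (hK : IsCompact K)
    (hne : K.Nonempty) (x : EuclideanSpace ℝ (Fin d)) : (nearestPoints K x).Nonempty :=
  let ⟨a, haK, ha⟩ := hK.exists_infDist_eq_dist hne x
  ⟨a, haK, ha.symm⟩

section InnerProductSpace

variable {E : Type*} [NormedAddCommGroup E] [InnerProductSpace ℝ E]

theorem real_inner_sub_sub_le_of_dist_le {x y a : E} (h : dist x a ≤ dist y a) :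
    ⟪y - x, a - x⟫ ≤ ‖y - x‖ ^ 2 / 2 := by
  have hexpand : ‖y - a‖ ^ 2 = ‖y - x‖ ^ 2 - 2 * ⟪y - x, a - x⟫ + ‖a - x‖ ^ 2 := by
    rw [← norm_sub_sq_real, sub_sub_sub_cancel_right]
  rw [dist_comm, dist_eq_norm, dist_eq_norm] at h
  nlinarith [norm_nonneg (a - x)]

theorem real_inner_sub_le_of_mem_convexHull {S : Set E} {u x s : E} {c : ℝ}
    (h : ∀ a ∈ S, ⟪u, a - x⟫ ≤ c) (hs : s ∈ convexHull ℝ S) : ⟪u, s - x⟫ ≤ c := by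
  have hconv : Convex ℝ {p : E | ⟪u, p - x⟫ ≤ c} := by
    simpa only [inner_sub_right, sub_le_iff_le_add, innerₛₗ_apply_apply] using
      convex_halfSpace_le (innerₛₗ ℝ u).isLinear (c + ⟪u, x⟫)
  exact convexHull_min h hconv hs

theorem real_inner_le_div_of_mem_segment {x s u v : E} {η c : ℝ} (hη : 0 < η) (hc : 0 ≤ c)
    (hseg : x + η • v ∈ segment ℝ x s) (hs : ⟪u, s - x⟫ ≤ c) : ⟪u, v⟫ ≤ c / η := by
  rw [segment_eq_image', Set.mem_image] at hseg
  obtain ⟨b, ⟨hb0, hb1⟩, hb⟩ := hseg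
  have hηb : η * ⟪u, v⟫ = b * ⟪u, s - x⟫ := by
    rw [← real_inner_smul_right, ← real_inner_smul_right, add_left_cancel hb]
  rw [le_div_iff₀ hη, mul_comm, hηb]
  nlinarith

theorem le_dist_of_real_inner_le {x y v : E} {η : ℝ} (hv : ‖v‖ = 1) (hη : 0 < η)
    (h : ⟪y - x, v⟫ ≤ ‖y - x‖ ^ 2 / (2 * η)) : η ≤ dist y (x + η • v) := by
  have hexpand : dist y (x + η • v) ^ 2 = ‖y - x‖ ^ 2 - 2 * η * ⟪y - x, v⟫ + η ^ 2 := by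
    rw [dist_eq_norm, sub_add_eq_sub_sub, norm_sub_sq_real, real_inner_smul_right, norm_smul,
      hv, Real.norm_of_nonneg hη.le]
    ring
  rw [le_div_iff₀ (by positivity)] at h
  nlinarith [dist_nonneg (x := y) (y := x + η • v)]

end InnerProductSpace

theorem quadratic_estimate_for_reach_general {d : ℕ}
    (K : Set (EuclideanSpace ℝ (Fin d))) (hne : K.Nonempty) (hK : IsCompact K)
    (x : EuclideanSpace ℝ (Fin d)) (r : ℝ)
    (hx : Metric.infDist x K = r)
    (hreg : x ∉ convexHull ℝ (nearestPoints K x))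
    (η : ℝ) (hη : η = Metric.infDist x (convexHull ℝ (nearestPoints K x)))
    (v : EuclideanSpace ℝ (Fin d)) (hv : ‖v‖ = 1)
    (s : EuclideanSpace ℝ (Fin d)) (hs : s ∈ convexHull ℝ (nearestPoints K x))
    (hseg : x + η • v ∈ segment ℝ x s) :
    ball (x + η • v) η ⊆ {y | Metric.infDist y K < r} ∧
      ∀ y : EuclideanSpace ℝ (Fin d), r ≤ Metric.infDist y K →
        (inner ℝ (y - x) v : ℝ) ≤ ‖y - x‖ ^ 2 / (2 * η) := by
  have hη0 : 0 < η := hη ▸ ((hK.nearestPoints x).convexHull.isClosed.notMem_iff_infDist_pos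
    ((nearestPoints_nonempty hK hne x).mono (subset_convexHull ℝ _))).mp hreg
  have key (y) (hy : r ≤ infDist y K) : ⟪y - x, v⟫ ≤ ‖y - x‖ ^ 2 / (2 * η) := by
    rw [← div_div]
    refine real_inner_le_div_of_mem_segment hη0 (by positivity) hseg
      (real_inner_sub_le_of_mem_convexHull (fun a ha => ?_) hs)
    refine real_inner_sub_sub_le_of_dist_le ?_
    calc dist x a = r := ha.2.trans hx
      _ ≤ infDist y K := hy
      _ ≤ dist y a := infDist_le_dist_of_mem ha.1
  exact ⟨fun y hy => not_le.mp fun h => (le_dist_of_real_inner_le hv hη0 (key y h)).not_gt hy, key⟩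

theorem quadratic_estimate_for_reach {d : ℕ}
    (K : Set (EuclideanSpace ℝ (Fin d))) (hne : K.Nonempty) (hK : IsCompact K)
    (x : EuclideanSpace ℝ (Fin d)) (r : ℝ) (hr : 0 < r)
    (hx : Metric.infDist x K = r)
    (hreg : x ∉ convexHull ℝ (nearestPoints K x))
    (η : ℝ) (hη : η = Metric.infDist x (convexHull ℝ (nearestPoints K x)))
    (v : EuclideanSpace ℝ (Fin d)) (hv : ‖v‖ = 1)
    (s : EuclideanSpace ℝ (Fin d)) (hs : s ∈ convexHull ℝ (nearestPoints K x))
    (hseg : x + η • v ∈ segment ℝ x s) :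
    ball (x + η • v) η ⊆ {y | Metric.infDist y K < r} ∧
      ∀ y : EuclideanSpace ℝ (Fin d), r ≤ Metric.infDist y K →
        (inner ℝ (y - x) v : ℝ) ≤ ‖y - x‖ ^ 2 / (2 * η) :=
  quadratic_estimate_for_reach_general K hne hK x r hx hreg η hη v hv s hs hseg
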